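/- arXiv:1412.3631 — 2 statements merged into one kernel-verified Lean document; each statement's English description precedes it below -/
import Mathlib

section
/- Let R be a semilocal ring (not necessarily commutative), I a left ideal of R, and a ∈ R such that Ra + I = R. Then the coset a + I contains a unit of R. -/
/-!
Units lift modulo the Jacobson radical, so it suffices to treat a semisimple ring `S`. There,
pick `I' ≤ I` with `S = Sa ⊕ I'`, and let `K` be the left annihilator of `a`, so that
`S = K ⊕ C` with `C ≅ Sa` via `r ↦ r * a`. Cancellation for semisimple modules of finite length
(which reduces, by induction on the length, to cancelling one simple summand) turns
`Sa ⊕ K ≅ S ≅ Sa ⊕ I'` into `K ≅ I'`. Gluing this isomorphism with `r ↦ r * a` on `C` gives an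
injective, hence bijective, endomorphism `r ↦ r * u` of `S` with `u = a + x`, `x ∈ I'`.
-/

open Submodule

theorem IsCoatom.isCompl_of_not_le {α : Type*} [Lattice α] [BoundedOrder α] {a c : α}
    (ha : IsCoatom a) (hc : IsAtom c) (h : ¬ c ≤ a) : IsCompl a c :=
  ⟨(hc.not_le_iff_disjoint.mp h).symm, ha.not_le_iff_codisjoint.mp h⟩

section Semisimple

variable {R M : Type*} [Ring R] [AddCommGroup M] [Module R M]

instance IsSemisimpleModule.prod {N : Type*} [AddCommGroup N] [Module R N]
    [IsSemisimpleModule R M] [IsSemisimpleModule R N] : IsSemisimpleModule R (M × N) := by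
  have := IsSemisimpleModule.sup (.range (LinearMap.inl R M N)) (.range (LinearMap.inr R M N))
  rw [LinearMap.sup_range_inl_inr] at this
  exact .congr Submodule.topEquiv.symm

/-- The witness is the graph `{t + φ t}` of `φ`. -/
theorem exists_isAtom_not_le_not_le_of_le {A B T T' : Submodule R M} (hTA : Disjoint T A)
    (hT'B : Disjoint T' B) (hTB : T ≤ B) (hT'A : T' ≤ A) (hT : IsAtom T) (φ : T ≃ₗ[R] T') :
    ∃ C, IsAtom C ∧ ¬ C ≤ A ∧ ¬ C ≤ B := by
  set g : T →ₗ[R] M := T.subtype + T'.subtype ∘ₗ φ.toLinearMap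
  have hg : Function.Injective g := by
    rw [← LinearMap.ker_eq_bot, eq_bot_iff]
    intro t ht
    have ht' : (t : M) = -φ t := eq_neg_of_add_eq_zero_left ht
    have : (t : M) = 0 := disjoint_def.mp hTA _ t.2 (ht' ▸ A.neg_mem (hT'A (φ t).2))
    exact (mem_bot R).mpr (Subtype.ext this)
  have : IsSimpleModule R T := isSimpleModule_iff_isAtom.mpr hT
  obtain ⟨t, htT, ht0⟩ := exists_mem_ne_zero_of_ne_bot hT.1
  refine ⟨LinearMap.range g, isSimpleModule_iff_isAtom.mp
    (.congr (LinearEquiv.ofInjective g hg).symm), fun hA => ht0 ?_, fun hB => ht0 ?_⟩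
  · have h : t + φ ⟨t, htT⟩ ∈ A := hA ⟨⟨t, htT⟩, rfl⟩
    exact disjoint_def.mp hTA t htT <| by
      simpa using A.sub_mem h (hT'A (φ ⟨t, htT⟩).2)
  · have h : t + φ ⟨t, htT⟩ ∈ B := hB ⟨⟨t, htT⟩, rfl⟩
    have hφ : (φ ⟨t, htT⟩ : M) = 0 := disjoint_def.mp hT'B _ (φ _).2 <| by
      simpa using B.sub_mem h (hTB htT)
    simpa using congrArg Subtype.val (φ.map_eq_zero_iff.mp (Subtype.ext hφ))

/-- Two maximal submodules with isomorphic simple quotients have a common complement. -/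
theorem nonempty_linearEquiv_of_quotient_linearEquiv [IsSemisimpleModule R M]
    {A B : Submodule R M} [IsSimpleModule R (M ⧸ A)] (e : (M ⧸ A) ≃ₗ[R] M ⧸ B) :
    Nonempty (A ≃ₗ[R] B) := by
  obtain ⟨T, hAT⟩ := exists_isCompl A
  obtain ⟨T', hBT'⟩ := exists_isCompl B
  let eT := quotientEquivOfIsCompl A T hAT
  let eT' := quotientEquivOfIsCompl B T' hBT'
  have : IsSimpleModule R (M ⧸ B) := .congr e.symm
  have : IsSimpleModule R T := .congr eT.symm
  have : IsSimpleModule R T' := .congr eT'.symm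
  have hA : IsCoatom A := isSimpleModule_iff_isCoatom.mp ‹_›
  have hB : IsCoatom B := isSimpleModule_iff_isCoatom.mp ‹_›
  have hT : IsAtom T := isSimpleModule_iff_isAtom.mp ‹_›
  have hT' : IsAtom T' := isSimpleModule_iff_isAtom.mp ‹_›
  obtain ⟨C, hC, hCA, hCB⟩ : ∃ C, IsAtom C ∧ ¬ C ≤ A ∧ ¬ C ≤ B := by
    by_cases hTB : T ≤ B
    · by_cases hT'A : T' ≤ A
      · exact exists_isAtom_not_le_not_le_of_le hAT.disjoint.symm hBT'.disjoint.symm hTB hT'A hT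
          (eT.symm ≪≫ₗ e ≪≫ₗ eT')
      · exact ⟨T', hT', hT'A, fun h => hT'.1 (hBT'.disjoint.symm.eq_bot_of_le h)⟩
    · exact ⟨T, hT, fun h => hT.1 (hAT.disjoint.symm.eq_bot_of_le h), hTB⟩
  exact ⟨(quotientEquivOfIsCompl C A (hA.isCompl_of_not_le hC hCA).symm).symm ≪≫ₗ
    quotientEquivOfIsCompl C B (hB.isCompl_of_not_le hC hCB).symm⟩

theorem nonempty_linearEquiv_of_prod_linearEquiv_prod_of_isSimpleModule {S Y Z : Type*}
    [AddCommGroup S] [Module R S] [AddCommGroup Y] [Module R Y] [AddCommGroup Z] [Module R Z]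
    [IsSimpleModule R S] [IsSemisimpleModule R Z] (e : (S × Y) ≃ₗ[R] S × Z) :
    Nonempty (Y ≃ₗ[R] Z) := by
  let qY := (LinearMap.fst R S Y).quotKerEquivOfSurjective LinearMap.fst_surjective
  let qZ := (LinearMap.fst R S Z).quotKerEquivOfSurjective LinearMap.fst_surjective
  have : IsSimpleModule R ((S × Z) ⧸ (LinearMap.fst R S Z).ker) := .congr qZ
  obtain ⟨f⟩ := nonempty_linearEquiv_of_quotient_linearEquiv
    (qZ ≪≫ₗ qY.symm ≪≫ₗ Quotient.equiv _ _ e rfl)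
  exact ⟨(.ofInjective _ LinearMap.inr_injective ≪≫ₗ .ofEq _ _ (LinearMap.ker_fst R S Y).symm) ≪≫ₗ
    e.submoduleMap _ ≪≫ₗ f.symm ≪≫ₗ
    (.ofEq _ _ (LinearMap.ker_fst R S Z) ≪≫ₗ
      (LinearEquiv.ofInjective _ LinearMap.inr_injective).symm)⟩

theorem nonempty_linearEquiv_of_prod_linearEquiv_prod {X Y Z : Type*}
    [AddCommGroup X] [Module R X] [AddCommGroup Y] [Module R Y] [AddCommGroup Z] [Module R Z]
    [IsSemisimpleModule R X] [IsSemisimpleModule R Z] (hX : Module.length R X ≠ ⊤)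
    (e : (X × Y) ≃ₗ[R] X × Z) : Nonempty (Y ≃ₗ[R] Z) := by
  lift Module.length R X to ℕ using hX with n hn
  induction n generalizing X with
  | zero =>
    have : Subsingleton X := Module.length_eq_zero_iff.mp (by exact_mod_cast hn.symm)
    let : Unique X := uniqueOfSubsingleton 0
    exact ⟨LinearEquiv.uniqueProd.symm ≪≫ₗ e ≪≫ₗ LinearEquiv.uniqueProd⟩
  | succ n ih =>
    have : Nontrivial X := Module.length_pos_iff.mp (by rw [← hn]; exact_mod_cast n.succ_pos)
    obtain ⟨S, hS, -⟩ := (eq_bot_or_exists_atom_le (⊤ : Submodule R X)).resolve_left top_ne_bot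
    have : IsSimpleModule R S := isSimpleModule_iff_isAtom.mpr hS
    obtain ⟨X₁, hSX₁⟩ := exists_isCompl S
    let d := prodEquivOfIsCompl S X₁ hSX₁
    have hlen : 1 + (n : ℕ∞) = 1 + Module.length R X₁ := by
      have hX := d.length_eq
      rw [Module.length_prod, Module.length_eq_one, ← hn] at hX
      rw [hX]; push_cast; ring
    obtain ⟨f⟩ := nonempty_linearEquiv_of_prod_linearEquiv_prod_of_isSimpleModule
      ((LinearEquiv.prodAssoc R S X₁ Y).symm ≪≫ₗ d.prodCongr (.refl R Y) ≪≫ₗ e ≪≫ₗ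
        d.symm.prodCongr (.refl R Z) ≪≫ₗ LinearEquiv.prodAssoc R S X₁ Z)
    exact ih f (WithTop.add_left_cancel ENat.one_ne_top hlen)

end Semisimple

theorem IsSemisimpleRing.exists_isUnit_add_of_span_sup_eq_top {S : Type*} [Ring S]
    [IsSemisimpleRing S] {I : Ideal S} {a : S} (h : Ideal.span {a} ⊔ I = ⊤) :
    ∃ x ∈ I, IsUnit (a + x) := by
  obtain ⟨I', hI'I, hI'⟩ := (codisjoint_iff.mpr (sup_comm (Ideal.span {a}) I ▸ h)).exists_isCompl
  let f := LinearMap.toSpanSingleton S S a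
  have hrange : LinearMap.range f = Ideal.span {a} := (LinearMap.span_singleton_eq_range S S a).symm
  obtain ⟨C, hKC⟩ := exists_isCompl (LinearMap.ker f)
  let eC : C ≃ₗ[S] Ideal.span {a} := (quotientEquivOfIsCompl _ C hKC).symm ≪≫ₗ
    f.quotKerEquivRange ≪≫ₗ .ofEq _ _ hrange
  obtain ⟨ψ⟩ : Nonempty (LinearMap.ker f ≃ₗ[S] I') :=
    nonempty_linearEquiv_of_prod_linearEquiv_prod Module.length_ne_top
      (eC.symm.prodCongr (.refl S _) ≪≫ₗ .prodComm S _ _ ≪≫ₗ prodEquivOfIsCompl _ C hKC ≪≫ₗ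
        (prodEquivOfIsCompl I' _ hI').symm ≪≫ₗ .prodComm S _ _)
  let p := (LinearMap.ker f).projectionOnto C hKC
  let θ : S →ₗ[S] S := I'.subtype ∘ₗ ψ.toLinearMap ∘ₗ p + f
  have hθ (r : S) : θ r = r * θ 1 := by simpa using θ.map_smul r 1
  have hinj : Function.Injective θ := by
    rw [← LinearMap.ker_eq_bot, eq_bot_iff]
    intro r hr
    have hsum : (ψ (p r) : S) + f r = 0 := hr
    have hfr : f r ∈ Ideal.span {a} := hrange ▸ LinearMap.mem_range_self f r
    have hψ : (ψ (p r) : S) = 0 := disjoint_def.mp hI'.disjoint _ (ψ (p r)).2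
      (eq_neg_of_add_eq_zero_left hsum ▸ neg_mem hfr)
    have hrK : r ∈ LinearMap.ker f := by rwa [hψ, zero_add] at hsum
    have hpr : p r = 0 := by simpa using hψ
    have hp := projectionOnto_apply_left hKC ⟨r, hrK⟩
    rw [show ((⟨r, hrK⟩ : LinearMap.ker f) : S) = r from rfl, hpr] at hp
    simpa using congrArg Subtype.val hp.symm
  obtain ⟨z, hz⟩ := IsArtinian.surjective_of_injective_endomorphism θ hinj 1
  refine ⟨ψ (p 1), hI'I (ψ (p 1)).2, IsUnit.of_mul_eq_one_right z ?_⟩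
  have hθ1 : θ 1 = a + ψ (p 1) := by simp [θ, f, add_comm]
  rw [← hθ1, ← hθ z, hz]

section Jacobson

variable {R : Type*} [Ring R]

theorem exists_mul_eq_one_of_mk'_jacobson_eq_one {w : R}
    (hw : (⊥ : TwoSidedIdeal R).jacobson.ringCon.mk' w = 1) : ∃ l, l * w = 1 := by
  have hJ : w - 1 ∈ Ideal.jacobson (⊥ : Ideal R) := by
    rw [← TwoSidedIdeal.bot_asIdeal, ← TwoSidedIdeal.asIdeal_jacobson, TwoSidedIdeal.mem_asIdeal,
      ← TwoSidedIdeal.rel_iff, ← RingCon.eq]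
    simpa using hw
  obtain ⟨l, hl⟩ := Ideal.exists_mul_sub_mem_of_sub_one_mem_jacobson w hJ
  exact ⟨l, sub_eq_zero.mp ((Submodule.mem_bot R).mp hl)⟩

theorem isUnit_of_isUnit_mk'_jacobson {u : R}
    (hu : IsUnit ((⊥ : TwoSidedIdeal R).jacobson.ringCon.mk' u)) : IsUnit u := by
  set π := (⊥ : TwoSidedIdeal R).jacobson.ringCon.mk'
  obtain ⟨v, hv⟩ := hu
  obtain ⟨z, hz⟩ := RingCon.mk'_surjective (⊥ : TwoSidedIdeal R).jacobson.ringCon ↑v⁻¹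
  obtain ⟨l, hl⟩ := exists_mul_eq_one_of_mk'_jacobson_eq_one (w := z * u)
    (by rw [map_mul, hz, ← hv, v.inv_mul])
  have hπl : π l = 1 := by
    have := congrArg π hl
    rwa [map_mul, map_mul, hz, ← hv, v.inv_mul, mul_one, map_one] at this
  obtain ⟨n, hn⟩ := exists_mul_eq_one_of_mk'_jacobson_eq_one (w := u * (l * z))
    (by rw [map_mul, map_mul, hπl, one_mul, hz, ← hv, v.mul_inv])
  have hmu : l * z * u = 1 := by rw [mul_assoc, hl]
  -- `u * (l * z)` is an idempotent with a left inverse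
  have hum : u * (l * z) = 1 := calc
    u * (l * z) = n * (u * (l * z)) * (u * (l * z)) := by rw [hn, one_mul]
    _ = n * (u * (l * z * u) * (l * z)) := by simp only [mul_assoc]
    _ = 1 := by rw [hmu, mul_one, hn]
  exact ⟨⟨u, l * z, hum, hmu⟩, rfl⟩

end Jacobson

/-- In a semilocal ring R, if I is a left ideal and Ra + I = R, then the coset
a + I contains a unit. -/
theorem stmt_12 (R : Type*) [Ring R]
    (hsemilocal : IsSemisimpleRing ((⊥ : TwoSidedIdeal R).jacobson.ringCon.Quotient) ∧
      IsArtinianRing ((⊥ : TwoSidedIdeal R).jacobson.ringCon.Quotient))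
    (I : Ideal R) (a : R) (h : Ideal.span {a} ⊔ I = ⊤) :
    ∃ x ∈ I, IsUnit (a + x) := by
  have := hsemilocal.1
  set π := (⊥ : TwoSidedIdeal R).jacobson.ringCon.mk'
  have hπ : Ideal.span {π a} ⊔ I.map π = ⊤ := by
    simpa [Ideal.map_sup, Ideal.map_span, Ideal.map_top] using congrArg (Ideal.map π) h
  obtain ⟨_, hx, hunit⟩ := IsSemisimpleRing.exists_isUnit_add_of_span_sup_eq_top hπ
  obtain ⟨x, hxI, rfl⟩ := (Ideal.mem_map_iff_of_surjective π (RingCon.mk'_surjective _)).mp hx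
  exact ⟨x, hxI, isUnit_of_isUnit_mk'_jacobson (by rwa [map_add])⟩
end

section
/- Let R be a semisimple Artinian ring and (a_1,…,a_n)ᵗ a column vector over R with n ≥ 2 such that Σ R·a_i = Re for an idempotent e. Then there exists ε ∈ E_n(R) (the subgroup of GL_n(R) generated by elementary transvections) with ε·(a_1,…,a_n)ᵗ = (0,…,0,e)ᵗ. -/
/-!
Semisimple rings satisfy a stable-range condition for left ideals: for all `a b` there is `t`
with `R (b + t a) = R a + R b`. This is the case `M = N = R` of
`range (g + f ∘ h) = range f + range g`, which is reached by enlarging `range (g + f ∘ h)` as long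
as possible: if a simple `p` has `f p ⊄ range g`, then `g` is not injective on the `p`-isotypic
component (it would be onto it, as that component is Artinian), so `ker g` contains a copy `T` of
`p`, and adding to `h` a map `T ≅ p` enlarges the range by `f p`.

Applied coordinate by coordinate, this lets elementary operations replace the last entry of `a`
by a generator `u` of `R e`; the other entries are right multiples of `u`, hence can be cleared,
and `(0, …, 0, u)` is turned into `(0, …, 0, e)` through a second coordinate.
-/

open Submodule LinearMap

section StableRange

variable {R M N : Type*} [Ring R] [AddCommGroup M] [Module R M] [AddCommGroup N] [Module R N]

theorem exists_isSimpleModule_map_not_le [IsSemisimpleModule R N] {f : N →ₗ[R] M}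
    {P : Submodule R M} (h : ¬ range f ≤ P) :
    ∃ p : Submodule R N, IsSimpleModule R p ∧ ¬ p.map f ≤ P := by
  by_contra! hp
  refine h (range_le_iff_comap.mpr (eq_top_iff.mpr ?_))
  rw [← IsSemisimpleModule.sSup_simples_eq_top]
  exact sSup_le fun p hp' => map_le_iff_le_comap.mp (hp p hp')

theorem exists_range_lt_range_add_comp [IsSemisimpleModule R M] [IsArtinian R M]
    [IsSemisimpleModule R N] {f : N →ₗ[R] M} {g : Module.End R M} (hfg : ¬ range f ≤ range g) :
    ∃ h : M →ₗ[R] N, range g < range (g + f ∘ₗ h) := by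
  obtain ⟨p, hp, hpg⟩ := exists_isSimpleModule_map_not_le hfg
  set I := isotypicComponent R M p
  have hker : ker g ⊓ I ≠ ⊥ := by
    intro hbot
    have hgI : ∀ x ∈ I, g x ∈ I := fun x hx => g.le_comap_isotypicComponent p hx
    have hinj : Function.Injective (g.restrict hgI) := by
      rw [← LinearMap.ker_eq_bot, ker_restrict, ← le_bot_iff]
      rintro x hx
      have : (x : M) ∈ ker g ⊓ I := ⟨hx, x.2⟩
      rw [hbot, mem_bot] at this
      exact (mem_bot R).mpr (Subtype.ext this)
    have hIg : I ≤ range g := fun y hy => by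
      obtain ⟨x, hx⟩ := IsArtinian.surjective_of_injective_endomorphism _ hinj ⟨y, hy⟩
      exact ⟨x, congrArg Subtype.val hx⟩
    exact hpg ((p.map_le_isotypicComponent f).trans hIg)
  obtain ⟨T, hTI, hT⟩ := (IsSemisimpleModule.eq_bot_or_exists_simple_le _).resolve_left hker
  obtain ⟨τ⟩ : Nonempty (T ≃ₗ[R] p) := isIsotypicOfType_submodule_iff.mp
    (IsIsotypicOfType.isotypicComponent R M p) T (hTI.trans inf_le_right)
  obtain ⟨W, hTW⟩ := exists_isCompl T
  refine ⟨p.subtype ∘ₗ τ.toLinearMap ∘ₗ T.projectionOnto W hTW,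
    left_lt_sup.mpr hpg |>.trans_le (sup_le ?_ ?_)⟩
  · rintro - ⟨x, rfl⟩
    refine ⟨W.projection T hTW.symm x, ?_⟩
    have hgT : g (T.projection W hTW x) = 0 := hTI.trans inf_le_left (projection_apply_mem hTW x)
    have hW : T.projectionOnto W hTW (W.projection T hTW.symm x) = 0 :=
      projectionOnto_apply_of_mem_right hTW (projection_apply_mem hTW.symm x)
    conv_rhs => rw [← projection_add_projection_eq_self hTW x, map_add, hgT, zero_add]
    simp [hW]
  · rintro - ⟨q, hq, rfl⟩
    refine ⟨τ.symm ⟨q, hq⟩, ?_⟩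
    have hgT : g (τ.symm ⟨q, hq⟩) = 0 := hTI.trans inf_le_left (τ.symm ⟨q, hq⟩).2
    simp [hgT]

theorem exists_range_add_comp_eq_sup [IsSemisimpleModule R M] [Module.Finite R M]
    [IsSemisimpleModule R N] (f : N →ₗ[R] M) (g : Module.End R M) :
    ∃ h : M →ₗ[R] N, range (g + f ∘ₗ h) = range f ⊔ range g := by
  obtain ⟨-, ⟨h, rfl⟩, hmax⟩ := set_has_maximal_iff_noetherian.mpr inferInstance
    (Set.range fun h : M →ₗ[R] N => range (g + f ∘ₗ h)) (Set.range_nonempty _)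
  have hf : range f ≤ range (g + f ∘ₗ h) := by
    by_contra hf
    obtain ⟨h', hlt⟩ := exists_range_lt_range_add_comp hf
    rw [add_assoc, ← comp_add] at hlt
    exact hmax _ ⟨h + h', rfl⟩ hlt
  refine ⟨h, le_antisymm ?_ (sup_le hf ?_)⟩
  · rw [sup_comm]
    exact (range_add_le _ _).trans (sup_le_sup_left (range_comp_le_range _ _) _)
  · rintro - ⟨x, rfl⟩
    rw [← add_sub_cancel_right (g x) (f (h x))]
    exact sub_mem ⟨x, rfl⟩ (hf ⟨h x, rfl⟩)

end StableRange

namespace Ideal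

variable {R : Type*} [Ring R] [IsSemisimpleRing R]

theorem exists_span_singleton_add_mul_eq_sup (a b : R) :
    ∃ t : R, span {b + t * a} = span {a} ⊔ span {b} := by
  obtain ⟨h, hh⟩ := exists_range_add_comp_eq_sup (toSpanSingleton R R a) (toSpanSingleton R R b)
  refine ⟨h 1, ?_⟩
  have hcomp : toSpanSingleton R R b + toSpanSingleton R R a ∘ₗ h =
      toSpanSingleton R R (b + h 1 * a) := by
    ext
    simp [mul_add]
  simp only [← submodule_span_eq, LinearMap.span_singleton_eq_range]
  rw [← hcomp, hh]

theorem exists_span_singleton_add_sum_eq_sup {ι : Type*} [DecidableEq ι] (s : Finset ι)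
    (v : ι → R) (b : R) :
    ∃ t : ι → R, span {b + ∑ i ∈ s, t i * v i} = span (v '' s) ⊔ span {b} := by
  induction s using Finset.induction with
  | empty => exact ⟨0, by simp⟩
  | @insert i s hi ih =>
    obtain ⟨t, ht⟩ := ih
    obtain ⟨c, hc⟩ := exists_span_singleton_add_mul_eq_sup (v i) (b + ∑ k ∈ s, t k * v k)
    refine ⟨Function.update t i c, ?_⟩
    have hsum : ∑ k ∈ s, Function.update t i c k * v k = ∑ k ∈ s, t k * v k :=
      Finset.sum_congr rfl fun k hk => by rw [Function.update_of_ne (ne_of_mem_of_not_mem hk hi)]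
    rw [Finset.sum_insert hi, Function.update_self, hsum, Finset.coe_insert, Set.image_insert_eq,
      span_insert, sup_assoc, ← ht, ← hc]
    congr 2
    abel

end Ideal

namespace Matrix

variable {R ι : Type*} [Ring R] [Fintype ι] [DecidableEq ι]

theorem one_add_single_mul_one_add_single {i j : ι} (hij : i ≠ j) (x y : R) :
    (1 + single i j x) * (1 + single i j y) = 1 + single i j (x + y) := by
  rw [mul_add, add_mul, add_mul, single_mul_single_of_ne (h := hij.symm), single_add]
  simp only [one_mul, mul_one, add_zero]
  abel

def transvectionUnit {i j : ι} (hij : i ≠ j) (x : R) : (Matrix ι ι R)ˣ where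
  val := 1 + single i j x
  inv := 1 + single i j (-x)
  val_inv := by rw [one_add_single_mul_one_add_single hij, add_neg_cancel, single_zero, add_zero]
  inv_val := by rw [one_add_single_mul_one_add_single hij, neg_add_cancel, single_zero, add_zero]

theorem one_add_single_mulVec {i j : ι} (hij : i ≠ j) (x : R) (c : ι → R) :
    (1 + single i j x) *ᵥ c = Function.update c i (c i + x * c j) := by
  ext k
  rcases eq_or_ne k i with rfl | hk <;> simp [add_mulVec, single_mulVec, *]

variable (R ι) in
def elementarySubgroup : Subgroup (Matrix ι ι R)ˣ :=
  Subgroup.closure {M | ∃ (i j : ι) (x : R), i ≠ j ∧ M.val = 1 + single i j x}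

def ElementaryReach (c d : ι → R) : Prop :=
  ∃ ε ∈ elementarySubgroup R ι, ε.val *ᵥ c = d

namespace ElementaryReach

theorem refl (c : ι → R) : ElementaryReach c c :=
  ⟨1, one_mem _, one_mulVec c⟩

theorem trans {c d f : ι → R} (hcd : ElementaryReach c d) (hdf : ElementaryReach d f) :
    ElementaryReach c f := by
  obtain ⟨ε, hε, rfl⟩ := hcd
  obtain ⟨δ, hδ, rfl⟩ := hdf
  exact ⟨δ * ε, mul_mem hδ hε, by rw [Units.val_mul, mulVec_mulVec]⟩

theorem update_add_mul (c : ι → R) {i j : ι} (hij : i ≠ j) (x : R) :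
    ElementaryReach c (Function.update c i (c i + x * c j)) :=
  ⟨transvectionUnit hij x, Subgroup.subset_closure ⟨i, j, x, hij, rfl⟩,
    one_add_single_mulVec hij x c⟩

theorem update_add_sum (c : ι → R) {l : ι} {s : Finset ι} (hl : l ∉ s) (t : ι → R) :
    ElementaryReach c (Function.update c l (c l + ∑ k ∈ s, t k * c k)) := by
  induction s using Finset.induction with
  | empty => simpa using refl c
  | @insert i s hi ih =>
    have hil : l ≠ i := fun h => hl (h ▸ Finset.mem_insert_self i s)
    refine (ih (fun h => hl (Finset.mem_insert_of_mem h))).trans ?_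
    convert update_add_mul _ hil (t i) using 1
    rw [Function.update_idem, Function.update_self, Function.update_of_ne hil.symm,
      Finset.sum_insert hi]
    abel_nf

theorem piecewise_add_mul (c : ι → R) {l : ι} {s : Finset ι} (hl : l ∉ s) (x : ι → R) :
    ElementaryReach c (s.piecewise (fun k => c k + x k * c l) c) := by
  induction s using Finset.induction with
  | empty => simpa using refl c
  | @insert i s hi ih =>
    have hil : i ≠ l := fun h => hl (h ▸ Finset.mem_insert_self i s)
    refine (ih (fun h => hl (Finset.mem_insert_of_mem h))).trans ?_
    convert update_add_mul _ hil (x i) using 1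
    rw [Finset.piecewise_insert, Finset.piecewise_eq_of_notMem _ _ _ hi,
      Finset.piecewise_eq_of_notMem _ _ _ (fun h => hl (Finset.mem_insert_of_mem h))]

theorem single_of_mul_eq {i l : ι} (hil : i ≠ l) {u v e : R} (hvu : v * u = e) (hue : u * e = u)
    (he : IsIdempotentElem e) : ElementaryReach (Pi.single l u) (Pi.single l e) := by
  -- in coordinates `(i, l)`: `(0, u) ↦ (e, u) ↦ (e, u + (e - u) e) = (e, e) ↦ (0, e)`
  have h₁ := update_add_mul (Pi.single l u) hil v
  rw [Pi.single_eq_of_ne hil, Pi.single_eq_same, zero_add, hvu] at h₁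
  have h₂ := update_add_mul (Function.update (Pi.single l u) i e) hil.symm (e - u)
  rw [Function.update_self, Function.update_of_ne hil.symm, Pi.single_eq_same, sub_mul, hue, he.eq,
    add_sub_cancel] at h₂
  have h₃ := update_add_mul (Function.update (Function.update (Pi.single l u) i e) l e) hil (-e)
  rw [Function.update_self, Function.update_of_ne hil, Function.update_self, neg_mul, he.eq,
    add_neg_cancel] at h₃
  convert h₁.trans (h₂.trans h₃) using 1
  ext k
  by_cases hk : k = i
  · subst hk; simp [hil]
  · by_cases hkl : k = l
    · subst hkl; simp [hk]
    · simp [hk, hkl]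

theorem single_of_span_range_eq [IsSemisimpleRing R] [Nontrivial ι] (l : ι) {a : ι → R} {e : R}
    (he : IsIdempotentElem e) (h : Ideal.span (Set.range a) = Ideal.span {e}) :
    ElementaryReach a (Pi.single l e) := by
  obtain ⟨i, hil⟩ := exists_ne l
  have hl : l ∉ Finset.univ.erase l := Finset.notMem_erase l _
  obtain ⟨t, ht⟩ := Ideal.exists_span_singleton_add_sum_eq_sup (Finset.univ.erase l) a (a l)
  set u := a l + ∑ k ∈ Finset.univ.erase l, t k * a k
  have hu : Ideal.span {u} = Ideal.span {e} := by
    rw [ht, ← h, sup_comm, ← Ideal.span_insert, ← Set.image_insert_eq, ← Finset.coe_insert,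
      Finset.insert_erase (Finset.mem_univ l), Finset.coe_univ, Set.image_univ]
  obtain ⟨v, hvu⟩ := Ideal.mem_span_singleton'.mp (hu ▸ Ideal.mem_span_singleton_self e)
  have hmul_right {x : R} (hx : x ∈ Ideal.span {e}) : x * e = x := by
    obtain ⟨r, rfl⟩ := Ideal.mem_span_singleton'.mp hx
    rw [mul_assoc, he.eq]
  have hcleared : ElementaryReach (Function.update a l u) (Pi.single l u) := by
    convert piecewise_add_mul _ hl fun k => -(a k * v) using 1
    ext k
    by_cases hk : k = l
    · subst hk; simp
    · rw [Finset.piecewise_eq_of_mem _ _ _ (Finset.mem_erase.mpr ⟨hk, Finset.mem_univ k⟩)]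
      rw [Function.update_of_ne hk, Function.update_self, neg_mul, mul_assoc, hvu,
        hmul_right (h ▸ Ideal.subset_span (Set.mem_range_self k)), add_neg_cancel,
        Pi.single_eq_of_ne hk]
  refine (update_add_sum a hl t).trans (hcleared.trans ?_)
  exact single_of_mul_eq hil hvu (hmul_right (hu ▸ Ideal.mem_span_singleton_self u)) he

end ElementaryReach

end Matrix

theorem stmt_14_general (R : Type*) [Ring R] [IsSemisimpleRing R]
    (n : ℕ) (hn : 2 ≤ n) (a : Fin n → R) (e : R) (he : IsIdempotentElem e)
    (h : Ideal.span (Set.range a) = Ideal.span {e}) :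
    ∃ ε ∈ Subgroup.closure
        {M : (Matrix (Fin n) (Fin n) R)ˣ | ∃ (i j : Fin n) (x : R), i ≠ j ∧
          M.val = 1 + Matrix.single i j x},
      Matrix.mulVec ε.val a =
        fun k => if k.1 = n - 1 then e else 0 := by
  have : Nontrivial (Fin n) := Fin.nontrivial_iff_two_le.mpr hn
  obtain ⟨ε, hε, hεa⟩ :=
    Matrix.ElementaryReach.single_of_span_range_eq ⟨n - 1, by omega⟩ he h
  refine ⟨ε, hε, hεa.trans ?_⟩
  ext k
  simp [Pi.single_apply, Fin.ext_iff]

set_option maxHeartbeats 1000000 in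
/-- In a semisimple Artinian ring, a column vector (a_1,…,a_n) (n ≥ 2) with
Σ R·a_i = Re, e idempotent, can be transformed by an element of E_n(R) into
(0,…,0,e). -/
theorem stmt_14 (R : Type*) [Ring R] [IsSemisimpleRing R] [IsArtinianRing R]
    (n : ℕ) (hn : 2 ≤ n) (a : Fin n → R) (e : R) (he : IsIdempotentElem e)
    (h : Ideal.span (Set.range a) = Ideal.span {e}) :
    ∃ ε ∈ Subgroup.closure
        {M : (Matrix (Fin n) (Fin n) R)ˣ | ∃ (i j : Fin n) (x : R), i ≠ j ∧
          M.val = 1 + Matrix.single i j x},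
      Matrix.mulVec ε.val a =
        fun k => if k.1 = n - 1 then e else 0 :=
  stmt_14_general R n hn a e he h
end
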